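/- For every integer d > 0, K ∩ η^d·K·η^{−d} = B·K_d, where B is the subgroup of upper triangular matrices in K. -/

import Mathlib

open Matrix
open scoped Pointwise

noncomputable section

/-- Ambient data for the paper: `E` is the unramified quadratic extension `F(√ε)` of a
nonarchimedean local field `F` of odd residual characteristic.  The field `F` is realized
as the fixed field of the nontrivial `F`-automorphism `σ` of `E`; `ν` is the discrete
valuation of `E` (extending the valuation of `F` normalized by `ν ϖ = 1` at a uniformizer
`ϖ` of `F`, and still surjecting onto `ℤ` since `E/F` is unramified); `q` is the (odd)
cardinality of the residue field of `F` (so `q²` is that of `E`); `ε ∈ O_F^×` is a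
non-square unit and `sqε = √ε` generates `E` over `F`.  The standard facts about the
norm map and squares are included as fields. -/
structure Setting (E : Type*) [Field E] where
  /-- the nontrivial `F`-automorphism of `E`, written `x̄ = σ x` -/
  σ : E →+* E
  σσ : ∀ x, σ (σ x) = x
  σ_ne_id : σ ≠ RingHom.id E
  /-- the valuation (only its values at nonzero elements matter) -/
  ν : E → ℤ
  ν_mul : ∀ {x y : E}, x ≠ 0 → y ≠ 0 → ν (x * y) = ν x + ν y
  ν_add : ∀ {x y : E}, x ≠ 0 → y ≠ 0 → x + y ≠ 0 → min (ν x) (ν y) ≤ ν (x + y)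
  ν_σ : ∀ x, ν (σ x) = ν x
  ν_surj : ∀ n : ℤ, ∃ x : E, x ≠ 0 ∧ ν x = n
  /-- a uniformizer of `F` -/
  ϖ : E
  ϖ_ne_zero : ϖ ≠ 0
  ϖ_fixed : σ ϖ = ϖ
  ν_ϖ : ν ϖ = 1
  /-- the residual cardinality of `F` -/
  q : ℕ
  q_odd : Odd q
  one_lt_q : 1 < q
  /-- a non-square unit of `O_F` -/
  ε : E
  ε_fixed : σ ε = ε
  ε_ne_zero : ε ≠ 0
  ν_ε : ν ε = 0
  ε_nonsquare : ¬ ∃ f : E, σ f = f ∧ f * f = ε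
  /-- a square root `√ε ∈ E` of `ε` -/
  sqε : E
  sqε_sq : sqε * sqε = ε
  sqε_conj : σ sqε = -sqε
  /-- `E = F(√ε)` -/
  generates : ∀ x : E, ∃ a b : E, σ a = a ∧ σ b = b ∧ x = a + b * sqε
  /-- the norm maps `O_E^×` onto `O_F^×` -/
  norm_surj_units : ∀ y : E, σ y = y → y ≠ 0 → ν y = 0 →
    ∃ x : E, x ≠ 0 ∧ ν x = 0 ∧ x * σ x = y
  /-- the norm maps `1 + p_E^d` onto `1 + p_F^d` for every `d ≥ 1` -/
  norm_surj_one_add : ∀ d : ℤ, 1 ≤ d → ∀ y : E, σ y = y → (y - 1 = 0 ∨ d ≤ ν (y - 1)) →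
    ∃ x : E, (x - 1 = 0 ∨ d ≤ ν (x - 1)) ∧ x * σ x = y
  /-- the residue field of `F` has `q` elements -/
  residue_F : ∃ R : Finset E, R.card = q ∧ (∀ r ∈ R, σ r = r ∧ (r = 0 ∨ 0 ≤ ν r)) ∧
    ∀ x : E, σ x = x → (x = 0 ∨ 0 ≤ ν x) →
      ∃! r, r ∈ R ∧ (x - r = 0 ∨ 1 ≤ ν (x - r))
  /-- the residue field of `E` has `q²` elements -/
  residue_E : ∃ R : Finset E, R.card = q ^ 2 ∧ (∀ r ∈ R, r = 0 ∨ 0 ≤ ν r) ∧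
    ∀ x : E, (x = 0 ∨ 0 ≤ ν x) →
      ∃! r, r ∈ R ∧ (x - r = 0 ∨ 1 ≤ ν (x - r))
  /-- Hensel: a unit of `O_E` that is a square modulo `p_E` is a square (residue char. odd) -/
  hensel_sq : ∀ u w : E, u ≠ 0 → ν u = 0 → w ≠ 0 → ν w = 0 →
    (w * w - u = 0 ∨ 1 ≤ ν (w * w - u)) → ∃ v : E, v * v = u

namespace Setting

variable {E : Type*} [Field E] (S : Setting E)

/-- `x` lies in the ring of integers `O_E`. -/
def inOE (x : E) : Prop := x = 0 ∨ 0 ≤ S.ν x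

/-- `x` lies in the (fractional, if `d ≤ 0`) ideal `p_E^d`. -/
def inpE (d : ℤ) (x : E) : Prop := x = 0 ∨ d ≤ S.ν x

/-- `x` is a unit of `O_E`. -/
def unitOE (x : E) : Prop := x ≠ 0 ∧ S.ν x = 0

/-- `x` lies in the subfield `F` (the fixed field of `σ`). -/
def inF (x : E) : Prop := S.σ x = x

/-- `x` is a unit of `O_F`. -/
def unitOF (x : E) : Prop := S.σ x = x ∧ x ≠ 0 ∧ S.ν x = 0

/-- `x` lies in `E¹`, i.e. has norm one. -/
def normOne (x : E) : Prop := x * S.σ x = 1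

/-- `x ∈ √ε·F`. -/
def inSqεF (x : E) : Prop := ∃ f : E, S.σ f = f ∧ x = S.sqε * f

/-- Entrywise application of `σ` to a matrix, `ḡ`. -/
def mbar (g : Matrix (Fin 2) (Fin 2) E) : Matrix (Fin 2) (Fin 2) E :=
  Matrix.of fun i j => S.σ (g i j)

/-- The antidiagonal matrix `w = [[0,1],[1,0]]` defining the hermitian form. -/
def wmat (_S : Setting E) : Matrix (Fin 2) (Fin 2) E := !![0, 1; 1, 0]

/-- Membership in `G = U(1,1)(F) = {g : ḡᵀ·w·g = w}`. -/
def inG (g : Matrix (Fin 2) (Fin 2) E) : Prop :=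
  (S.mbar g)ᵀ * S.wmat * g = S.wmat

/-- `G = U(1,1)(F)`, as a set of 2×2 matrices over `E`. -/
def Gset : Set (Matrix (Fin 2) (Fin 2) E) := {g | S.inG g}

/-- `G_der = SU(1,1)(F) = {g ∈ G : det g = 1}`. -/
def Gder : Set (Matrix (Fin 2) (Fin 2) E) := {g | S.inG g ∧ g.det = 1}

/-- The standard maximal compact subgroup `K` of `G` (entries in `O_E`). -/
def Kset : Set (Matrix (Fin 2) (Fin 2) E) := {g | S.inG g ∧ ∀ i j, S.inOE (g i j)}

/-- The congruence subgroup `K_d = {k ∈ K : k − 1 ∈ p_E^d·M₂(O_E)}`. -/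
def Kfil (d : ℤ) : Set (Matrix (Fin 2) (Fin 2) E) :=
  {g | g ∈ S.Kset ∧ ∀ i j, S.inpE d ((g - 1) i j)}

/-- The subgroup `B` of upper triangular matrices in `K`. -/
def Bset : Set (Matrix (Fin 2) (Fin 2) E) := {g | g ∈ S.Kset ∧ g 1 0 = 0}

/-- The subgroup `B^op` of lower triangular matrices in `K`. -/
def Bop : Set (Matrix (Fin 2) (Fin 2) E) := {g | g ∈ S.Kset ∧ g 0 1 = 0}

/-- The center `Z = {z·I : z ∈ E¹}` of `G`. -/
def Zset : Set (Matrix (Fin 2) (Fin 2) E) :=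
  {g | ∃ z : E, S.normOne z ∧ g = z • (1 : Matrix (Fin 2) (Fin 2) E)}

/-- The matrix `α^t = diag(ϖ^{−t}, ϖ^t)`. -/
def αmat (t : ℕ) : Matrix (Fin 2) (Fin 2) E := !![(S.ϖ ^ t)⁻¹, 0; 0, S.ϖ ^ t]

/-- The matrix `η = diag(1, ϖ)` (it normalizes `G`). -/
def ηmat : Matrix (Fin 2) (Fin 2) E := !![1, 0; 0, S.ϖ]

/-- The matrix `η⁻¹ = diag(1, ϖ⁻¹)`. -/
def ηinv : Matrix (Fin 2) (Fin 2) E := !![1, 0; 0, S.ϖ⁻¹]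

/-- The torus `T_{γ₁,γ₂} = {[[a,bγ₁],[bγ₂,a]] : a·ā + b·b̄·γ₁γ₂ = 1, ā·b ∈ √ε·F}`. -/
def Tset (γ₁ γ₂ : E) : Set (Matrix (Fin 2) (Fin 2) E) :=
  {g | ∃ a b : E, g = !![a, b * γ₁; b * γ₂, a] ∧
    a * S.σ a + b * S.σ b * (γ₁ * γ₂) = 1 ∧ S.inSqεF (S.σ a * b)}

/-- The Moy–Prasad filtration subgroup `G_{y,r}` of `G` (for `r > 0`). -/
def Gfil (y r : ℚ) : Set (Matrix (Fin 2) (Fin 2) E) :=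
  {g | S.inG g ∧ S.inpE ⌈r⌉ (g 0 0 - 1) ∧ S.inpE ⌈r⌉ (g 1 1 - 1) ∧
    S.inpE ⌈r - y⌉ (g 0 1) ∧ S.inpE ⌈r + y⌉ (g 1 0)}

/-- `G_{y,0+} = ⋃_{r>0} G_{y,r}`. -/
def Gfil0plus (y : ℚ) : Set (Matrix (Fin 2) (Fin 2) E) :=
  {g | ∃ r : ℚ, 0 < r ∧ g ∈ S.Gfil y r}

end Setting

/-!
Conjugation by `η^d = diag(1, ϖ^d)` multiplies the entries `g₀₁` and `g₁₀` by `ϖ^{-d}` and `ϖ^d`,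
so `K ∩ η^d K η^{-d}` is the set of `g ∈ K` with `g₁₀ ∈ p_E^d`. Such a `g` factors as
`g = (g·u(-t))·u(t)` with `u(t) = [[1,0],[t,1]]` and `t = g₁₀ / g₁₁`: the relation `g w ḡᵀ = w`
(as `g⁻¹ = w ḡᵀ w`) gives `g₁₁ ḡ₀₀ ≡ 1 mod p_E`, so `g₁₁` is a unit and `t ∈ p_E^d`, and
`g₁₁ ḡ₁₀ + g₁₀ ḡ₁₁ = 0`, so `t + t̄ = 0` and `u(t) ∈ K_d`; finally `g·u(-t)` is upper triangular.
-/

namespace Setting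

variable {E : Type*} [Field E] (S : Setting E)

section Valuation

lemma ν_one : S.ν 1 = 0 := by
  have h := S.ν_mul (one_ne_zero (α := E)) one_ne_zero
  rw [mul_one] at h
  omega

lemma ν_neg {x : E} (hx : x ≠ 0) : S.ν (-x) = S.ν x := by
  have h := S.ν_mul (neg_ne_zero.2 (one_ne_zero (α := E))) (neg_ne_zero.2 one_ne_zero)
  rw [neg_mul_neg, one_mul, S.ν_one] at h
  have h' := S.ν_mul (neg_ne_zero.2 (one_ne_zero (α := E))) hx
  rw [neg_one_mul] at h'
  omega

lemma ν_inv {x : E} (hx : x ≠ 0) : S.ν x⁻¹ = -S.ν x := by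
  have h := S.ν_mul hx (inv_ne_zero hx)
  rw [mul_inv_cancel₀ hx, S.ν_one] at h
  omega

lemma ν_ϖ_pow (n : ℕ) : S.ν (S.ϖ ^ n) = n := by
  induction n with
  | zero => simpa using S.ν_one
  | succ n ih =>
    rw [pow_succ, S.ν_mul (pow_ne_zero _ S.ϖ_ne_zero) S.ϖ_ne_zero, ih, S.ν_ϖ]
    push_cast
    ring

lemma inpE_zero_one : S.inpE 0 1 := Or.inr S.ν_one.ge

@[simp]
lemma inpE_zero (d : ℤ) : S.inpE d 0 := Or.inl rfl

@[simp]
lemma inOE_iff_inpE_zero (x : E) : S.inOE x ↔ S.inpE 0 x := Iff.rfl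

variable {S}

lemma inpE.mono {d d' : ℤ} {x : E} (hx : S.inpE d x) (h : d' ≤ d) : S.inpE d' x :=
  hx.imp_right h.trans

lemma inpE.neg {d : ℤ} {x : E} (hx : S.inpE d x) : S.inpE d (-x) := by
  rcases eq_or_ne x 0 with rfl | h0
  · simp
  · exact hx.imp (fun h => absurd h h0) (fun h => (S.ν_neg h0).symm ▸ h)

lemma inpE.add {d : ℤ} {x y : E} (hx : S.inpE d x) (hy : S.inpE d y) :
    S.inpE d (x + y) := by
  rcases eq_or_ne x 0 with rfl | hx0
  · simpa using hy
  rcases eq_or_ne y 0 with rfl | hy0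
  · simpa using hx
  rcases eq_or_ne (x + y) 0 with hxy | hxy
  · exact Or.inl hxy
  exact Or.inr ((le_min (hx.resolve_left hx0) (hy.resolve_left hy0)).trans (S.ν_add hx0 hy0 hxy))

lemma inpE.mul {d e : ℤ} {x y : E} (hx : S.inpE d x) (hy : S.inpE e y) :
    S.inpE (d + e) (x * y) := by
  rcases eq_or_ne x 0 with rfl | hx0
  · exact Or.inl (zero_mul y)
  rcases eq_or_ne y 0 with rfl | hy0
  · exact Or.inl (mul_zero x)
  rw [inpE, S.ν_mul hx0 hy0]
  exact Or.inr (add_le_add (hx.resolve_left hx0) (hy.resolve_left hy0))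

lemma inpE.map_σ {d : ℤ} {x : E} (hx : S.inpE d x) : S.inpE d (S.σ x) := by
  rcases eq_or_ne x 0 with rfl | h0
  · exact Or.inl (map_zero S.σ)
  · exact Or.inr (S.ν_σ x ▸ hx.resolve_left h0)

lemma unitOE.inpE_zero_inv {u : E} (hu : S.unitOE u) : S.inpE 0 u⁻¹ :=
  Or.inr (by rw [S.ν_inv hu.1, hu.2, neg_zero])

lemma inpE_ϖ_pow (n : ℕ) : S.inpE n (S.ϖ ^ n) :=
  Or.inr (S.ν_ϖ_pow n).ge

lemma inpE_ϖ_pow_inv (n : ℕ) : S.inpE (-n) (S.ϖ ^ n)⁻¹ :=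
  Or.inr (by rw [S.ν_inv (pow_ne_zero _ S.ϖ_ne_zero), S.ν_ϖ_pow])

lemma unitOE_of_mul_add_eq_one {x y z : E} (hx : S.inOE x) (hy : S.inOE y) (hz : S.inpE 1 z)
    (h : x * y + z = 1) : S.unitOE x := by
  have hxy : x * y ≠ 0 ∧ S.ν (x * y) ≤ 0 := by
    rcases eq_or_ne z 0 with rfl | hz0
    · rw [add_zero] at h
      exact ⟨by rw [h]; exact one_ne_zero, by rw [h, S.ν_one]⟩
    have hz1 := hz.resolve_left hz0
    have hxy0 : x * y ≠ 0 := fun h0 => by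
      rw [h0, zero_add] at h
      rw [h, S.ν_one] at hz1
      omega
    have := S.ν_add hxy0 hz0 (by rw [h]; exact one_ne_zero)
    rw [h, S.ν_one] at this
    exact ⟨hxy0, by omega⟩
  obtain ⟨hx0, hy0⟩ := mul_ne_zero_iff.1 hxy.1
  have := S.ν_mul hx0 hy0
  have := hx.resolve_left hx0
  have := hy.resolve_left hy0
  exact ⟨hx0, by omega⟩

end Valuation

section Matrices

variable {S}

lemma mbar_mul (g h : Matrix (Fin 2) (Fin 2) E) : S.mbar (g * h) = S.mbar g * S.mbar h := by
  ext i j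
  simp [mbar, Matrix.mul_apply]

lemma inG.mul {g h : Matrix (Fin 2) (Fin 2) E} (hg : S.inG g) (hh : S.inG h) : S.inG (g * h) := by
  unfold inG at *
  rw [mbar_mul, transpose_mul]
  calc (S.mbar h)ᵀ * (S.mbar g)ᵀ * S.wmat * (g * h)
      = (S.mbar h)ᵀ * ((S.mbar g)ᵀ * S.wmat * g) * h := by simp only [Matrix.mul_assoc]
    _ = S.wmat := by rw [hg, hh]

lemma wmat_mul_wmat : S.wmat * S.wmat = 1 := by
  simp [wmat, one_fin_two]

lemma inG.mul_wmat_mul_mbar_transpose {g : Matrix (Fin 2) (Fin 2) E} (hg : S.inG g) :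
    g * S.wmat * (S.mbar g)ᵀ = S.wmat := by
  have hinv : (S.wmat * (S.mbar g)ᵀ * S.wmat) * g = 1 := by
    rw [Matrix.mul_assoc, Matrix.mul_assoc, ← Matrix.mul_assoc _ S.wmat g, hg, wmat_mul_wmat]
  calc g * S.wmat * (S.mbar g)ᵀ = g * (S.wmat * (S.mbar g)ᵀ * S.wmat) * S.wmat := by
        simp only [Matrix.mul_assoc, wmat_mul_wmat, Matrix.mul_one]
    _ = S.wmat := by rw [mul_eq_one_comm.1 hinv, Matrix.one_mul]

lemma inG_iff (a b c e : E) :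
    S.inG !![a, b; c, e] ↔
      (S.σ c * a + S.σ a * c = 0 ∧ S.σ c * b + S.σ a * e = 1 ∧
       S.σ e * a + S.σ b * c = 1 ∧ S.σ e * b + S.σ b * e = 0) := by
  rw [inG, ← Matrix.ext_iff]
  simp [Fin.forall_fin_two, mbar, wmat, Matrix.mul_apply, and_assoc]

lemma inOE_mul_apply {g h : Matrix (Fin 2) (Fin 2) E} (hg : ∀ i j, S.inOE (g i j))
    (hh : ∀ i j, S.inOE (h i j)) (i j : Fin 2) : S.inOE ((g * h) i j) := by
  rw [Matrix.mul_apply, Fin.sum_univ_two]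
  simpa using ((inpE.mul (hg i 0) (hh 0 j)).add (inpE.mul (hg i 1) (hh 1 j)) :)

lemma mul_mem_Kset {g h : Matrix (Fin 2) (Fin 2) E} (hg : g ∈ S.Kset) (hh : h ∈ S.Kset) :
    g * h ∈ S.Kset :=
  ⟨hg.1.mul hh.1, inOE_mul_apply hg.2 hh.2⟩

end Matrices

section Conjugation

variable {S}

lemma inG_diagonal_conj {x : E} (hx : S.σ x = x) (hx0 : x ≠ 0) {g : Matrix (Fin 2) (Fin 2) E}
    (hg : S.inG g) : S.inG (diagonal ![1, x⁻¹] * g * diagonal ![1, x]) := by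
  rw [eta_fin_two g, inG_iff] at hg
  obtain ⟨h1, h2, h3, h4⟩ := hg
  have hconj : diagonal ![1, x⁻¹] * g * diagonal ![1, x] =
      !![g 0 0, g 0 1 * x; x⁻¹ * g 1 0, g 1 1] := by
    ext i j
    fin_cases i <;> fin_cases j <;> simp [diagonal_mul, mul_diagonal]
    field_simp
  rw [hconj, inG_iff]
  simp only [map_mul, map_inv₀, hx]
  refine ⟨?_, ?_, ?_, ?_⟩ <;> field_simp
  · linear_combination h1
  · linear_combination h2
  · linear_combination h3
  · linear_combination x * h4

variable (S)

lemma ηmat_pow (n : ℕ) : S.ηmat ^ n = diagonal ![1, S.ϖ ^ n] := by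
  have : S.ηmat = diagonal ![1, S.ϖ] := by
    ext i j
    fin_cases i <;> fin_cases j <;> simp [ηmat]
  rw [this, diagonal_pow]
  congr 1
  ext i
  fin_cases i <;> simp

lemma ηinv_pow (n : ℕ) : S.ηinv ^ n = diagonal ![1, (S.ϖ ^ n)⁻¹] := by
  have : S.ηinv = diagonal ![1, S.ϖ⁻¹] := by
    ext i j
    fin_cases i <;> fin_cases j <;> simp [ηinv]
  rw [this, diagonal_pow]
  congr 1
  ext i
  fin_cases i <;> simp [inv_pow]

lemma ηmat_pow_mul_ηinv_pow (n : ℕ) : S.ηmat ^ n * S.ηinv ^ n = 1 := by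
  rw [ηmat_pow, ηinv_pow, diagonal_mul_diagonal, ← diagonal_one]
  congr 1
  ext i
  fin_cases i <;> simp [S.ϖ_ne_zero]

lemma mem_Kset_inter_conj_iff (n : ℕ) (g : Matrix (Fin 2) (Fin 2) E) :
    g ∈ S.Kset ∩ ((fun k => S.ηmat ^ n * k * S.ηinv ^ n) '' S.Kset) ↔
      g ∈ S.Kset ∧ S.inpE n (g 1 0) := by
  constructor
  · rintro ⟨hg, k, hk, rfl⟩
    refine ⟨hg, ?_⟩
    simpa [ηmat_pow, ηinv_pow, diagonal_mul, mul_diagonal] using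
      (inpE_ϖ_pow n).mul (d := n) (e := 0) (hk.2 1 0)
  · rintro ⟨hg, hc⟩
    refine ⟨hg, S.ηinv ^ n * g * S.ηmat ^ n, ⟨?_, fun i j => ?_⟩, ?_⟩
    · rw [ηinv_pow, ηmat_pow]
      exact inG_diagonal_conj (by simp [S.ϖ_fixed]) (pow_ne_zero _ S.ϖ_ne_zero) hg.1
    · fin_cases i <;> fin_cases j <;> simp [ηmat_pow, ηinv_pow, diagonal_mul, mul_diagonal]
      · exact hg.2 0 0
      · exact (inpE.mul (d := 0) (hg.2 0 1) (inpE_ϖ_pow n)).mono (by omega)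
      · simpa using (inpE_ϖ_pow_inv n).mul hc
      · rw [mul_right_comm, inv_mul_cancel₀ (pow_ne_zero _ S.ϖ_ne_zero), one_mul]
        exact hg.2 1 1
    · calc S.ηmat ^ n * (S.ηinv ^ n * g * S.ηmat ^ n) * S.ηinv ^ n
          = (S.ηmat ^ n * S.ηinv ^ n) * g * (S.ηmat ^ n * S.ηinv ^ n) := by
            simp only [Matrix.mul_assoc]
        _ = g := by rw [ηmat_pow_mul_ηinv_pow, Matrix.one_mul, Matrix.mul_one]

end Conjugation

section Factorization

variable {S}

lemma inG_lowerUnipotent {t : E} (ht : S.σ t + t = 0) : S.inG !![1, 0; t, 1] := by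
  rw [inG_iff]
  simpa using ht

lemma lowerUnipotent_mem_Kfil {d : ℤ} (hd : 0 ≤ d) {t : E} (ht : S.inpE d t)
    (htr : S.σ t + t = 0) : !![1, 0; t, 1] ∈ S.Kfil d := by
  refine ⟨⟨inG_lowerUnipotent htr, fun i j => ?_⟩, fun i j => ?_⟩ <;>
    fin_cases i <;> fin_cases j <;> simp [ht.mono hd, ht, S.inpE_zero_one]

lemma mul_mem_Kset_of_mem_Bset_of_mem_Kfil {d : ℤ} {b k : Matrix (Fin 2) (Fin 2) E}
    (hb : b ∈ S.Bset) (hk : k ∈ S.Kfil d) : b * k ∈ S.Kset ∧ S.inpE d ((b * k) 1 0) := by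
  refine ⟨mul_mem_Kset hb.1 hk.1, ?_⟩
  have hk10 : S.inpE d (k 1 0) := by simpa using hk.2 1 0
  simpa [Matrix.mul_apply, hb.2] using inpE.mul (d := 0) (hb.1.2 1 1) hk10

lemma exists_mem_Bset_mem_Kfil_mul_eq {d : ℤ} (hd : 1 ≤ d) {g : Matrix (Fin 2) (Fin 2) E}
    (hg : g ∈ S.Kset) (hc : S.inpE d (g 1 0)) : ∃ b ∈ S.Bset, ∃ k ∈ S.Kfil d, b * k = g := by
  have hrow := hg.1.mul_wmat_mul_mbar_transpose
  have hrow10 : g 1 1 * S.σ (g 0 0) + g 1 0 * S.σ (g 0 1) = 1 := by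
    simpa [Matrix.mul_apply, wmat, mbar, add_comm] using congrFun₂ hrow 1 0
  have hrow11 : g 1 1 * S.σ (g 1 0) + g 1 0 * S.σ (g 1 1) = 0 := by
    simpa [Matrix.mul_apply, wmat, mbar] using congrFun₂ hrow 1 1
  have he : S.unitOE (g 1 1) :=
    unitOE_of_mul_add_eq_one (hg.2 1 1) (inpE.map_σ (hg.2 0 0))
      (inpE.mul (e := 0) (hc.mono hd) (inpE.map_σ (hg.2 0 1)) |>.mono (by omega)) hrow10
  set t := g 1 0 * (g 1 1)⁻¹ with ht_def
  have ht : S.inpE d t := by simpa using hc.mul he.inpE_zero_inv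
  have htr : S.σ t + t = 0 := by
    rw [ht_def, map_mul, map_inv₀]
    field_simp [he.1, (map_ne_zero S.σ).2 he.1]
    linear_combination hrow11
  have hk := lowerUnipotent_mem_Kfil (by omega) ht htr
  have hk' := lowerUnipotent_mem_Kfil (by omega) ht.neg (by rw [map_neg]; linear_combination -htr)
  refine ⟨g * !![1, 0; -t, 1], ⟨mul_mem_Kset hg hk'.1, ?_⟩, _, hk, ?_⟩
  · simp [Matrix.mul_apply, ht_def, mul_left_comm (g 1 1), mul_inv_cancel₀ he.1]
  · rw [Matrix.mul_assoc, mul_fin_two]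
    simp [← one_fin_two]

lemma Bset_mul_Kfil {d : ℤ} (hd : 1 ≤ d) :
    S.Bset * S.Kfil d = {g | g ∈ S.Kset ∧ S.inpE d (g 1 0)} := by
  ext g
  constructor
  · rintro ⟨b, hb, k, hk, rfl⟩
    exact mul_mem_Kset_of_mem_Bset_of_mem_Kfil hb hk
  · rintro ⟨hg, hc⟩
    exact exists_mem_Bset_mem_Kfil_mul_eq hd hg hc

end Factorization

end Setting

/-- For every integer `d > 0`, `K ∩ η^d·K·η^{−d} = B·K_d`, where `B` is
the subgroup of upper triangular matrices in `K`. -/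
theorem statement8 {E : Type*} [Field E] (S : Setting E) (d : ℕ) (hd : 0 < d) :
    S.Kset ∩ ((fun k => S.ηmat ^ d * k * S.ηinv ^ d) '' S.Kset) = S.Bset * S.Kfil d := by
  rw [Setting.Bset_mul_Kfil (by omega)]
  ext g
  exact S.mem_Kset_inter_conj_iff d g
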